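/- arXiv:1104.0293 — 2 statements merged into one kernel-verified Lean document; each statement's English description precedes it below -/
import Mathlib

section
/- Let H be a reduced, commutative, cancellative, atomic monoid. Then c_eq(H) ≤ sup{|y| : (x,y) ∈ A(∼_{H,eq}) and x, y are not ≈_eq-related}. -/
/-!
Induct on the common length of two factorizations `z, z'` of `a`. Write
`(z, z') = (x, y) + (r, r')` with `(x, y)` an atom of `∼_{H,eq}`. The factorization `y + r` shares
the atoms of `y` with `z' = y + r'`, and two factorizations with a common atom are connected by
cancelling it and applying the induction hypothesis. From `z = x + r` to `y + r`: if `x ≈_eq y`,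
each link of an equal-length `R`-chain from `x` to `y`, translated by `r`, joins two
factorizations with a common atom; otherwise a single step of distance `d(x, y) ≤ |y|` suffices.
-/

namespace CMR

variable {α : Type*} [CancelCommMonoid α]

/-- The factorization monoid `Z(H)`: the free abelian monoid over the set of atoms of `H`,
modeled as multisets of atoms. -/
abbrev Fac (α : Type*) [CancelCommMonoid α] : Type _ := Multiset {u : α // Irreducible u}

/-- The factorization homomorphism `π : Z(H) → H`. -/
def piF (z : Fac α) : α := (z.map Subtype.val).prod

/-- `Z a`: the set of factorizations of `a`. -/
def Z (a : α) : Set (Fac α) := {z | piF z = a}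

/-- `L a`: the set of lengths of `a`. -/
def L (a : α) : Set ℕ := {n | ∃ z ∈ Z a, Multiset.card z = n}

/-- `Zk a k`: the factorizations of `a` of length `k`. -/
def Zk (a : α) (k : ℕ) : Set (Fac α) := {z ∈ Z a | Multiset.card z = k}

/-- `ZM a M`: the factorizations of `a` whose length lies in `M`. -/
def ZM (a : α) (M : Set ℕ) : Set (Fac α) := {z ∈ Z a | Multiset.card z ∈ M}

/-- The distance between two factorizations:
`d(z,z') = max (|z / gcd(z,z')|, |z' / gcd(z,z')|)`. -/
noncomputable def d (z z' : Fac α) : ℕ :=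
  letI := Classical.decEq {u : α // Irreducible u}
  max (Multiset.card (z - z')) (Multiset.card (z' - z))

/-- The distance between two sets of factorizations, the minimum of pairwise
distances (with the convention `sInf ∅ = 0`). -/
noncomputable def dS (X Y : Set (Fac α)) : ℕ :=
  sInf {n : ℕ | ∃ x ∈ X, ∃ y ∈ Y, d x y = n}

/-- `k` and `l` are adjacent lengths of `a` (with `k < l`):
`L(a) ∩ [k, l] = {k, l}`. -/
def Adjacent (a : α) (k l : ℕ) : Prop :=
  k ∈ L a ∧ l ∈ L a ∧ k < l ∧ ∀ m ∈ L a, k ≤ m → m ≤ l → m = k ∨ m = l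

/-- A chain of factorizations of `a` from `z` to `z'` whose consecutive members
satisfy the step predicate `P`. -/
def Chain (a : α) (P : Fac α → Fac α → Prop) (z z' : Fac α) : Prop :=
  ∃ (n : ℕ) (c : Fin (n + 1) → Fac α),
    c 0 = z ∧ c (Fin.last n) = z' ∧ (∀ i, c i ∈ Z a) ∧
    ∀ i : Fin n, P (c i.castSucc) (c i.succ)

/-- The catenary degree of an element: the smallest `N ∈ ℕ∞` such that any two
factorizations of `a` are connected by an `N`-chain. -/
noncomputable def cat (a : α) : ℕ∞ :=
  sInf {N : ℕ∞ | ∀ z ∈ Z a, ∀ z' ∈ Z a,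
    Chain a (fun x y => (d x y : ℕ∞) ≤ N) z z'}

/-- The equal catenary degree of an element: the smallest `N ∈ ℕ∞` such that any two
factorizations of `a` of the same length are connected by an equal-length `N`-chain. -/
noncomputable def ceq (a : α) : ℕ∞ :=
  sInf {N : ℕ∞ | ∀ z ∈ Z a, ∀ z' ∈ Z a, Multiset.card z = Multiset.card z' →
    Chain a (fun x y => (d x y : ℕ∞) ≤ N ∧ Multiset.card x = Multiset.card y) z z'}

/-- The monotone catenary degree of an element: the smallest `N ∈ ℕ∞` such that any two
factorizations of `a` (ordered by length) are connected by a monotone `N`-chain. -/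
noncomputable def cmon (a : α) : ℕ∞ :=
  sInf {N : ℕ∞ | ∀ z ∈ Z a, ∀ z' ∈ Z a, Multiset.card z ≤ Multiset.card z' →
    Chain a (fun x y => (d x y : ℕ∞) ≤ N ∧ Multiset.card x ≤ Multiset.card y) z z'}

/-- The adjacent catenary degree of an element:
`c_adj(a) = sup{d(Z_k(a), Z_l(a)) : k, l ∈ L(a) adjacent}`. -/
noncomputable def cadj (a : α) : ℕ∞ :=
  sSup {r : ℕ∞ | ∃ k l : ℕ, Adjacent a k l ∧ r = (dS (Zk a k) (Zk a l) : ℕ∞)}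

noncomputable def catH (α : Type*) [CancelCommMonoid α] : ℕ∞ := ⨆ a : α, cat a
noncomputable def ceqH (α : Type*) [CancelCommMonoid α] : ℕ∞ := ⨆ a : α, ceq a
noncomputable def cmonH (α : Type*) [CancelCommMonoid α] : ℕ∞ := ⨆ a : α, cmon a
noncomputable def cadjH (α : Type*) [CancelCommMonoid α] : ℕ∞ := ⨆ a : α, cadj a

/-- `gcd(x, y) ≠ 1`: the two factorizations share an atom. -/
def RStep (x y : Fac α) : Prop := ∃ u, u ∈ x ∧ u ∈ y

/-- `z ≈ z'`: there is an `R`-chain concatenating `z` and `z'` in `Z a`. -/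
def RRel (a : α) (z z' : Fac α) : Prop := Chain a RStep z z'

/-- `z ≈_eq z'`: there is an equal-length `R`-chain concatenating `z` and `z'` in `Z a`. -/
def RRelEq (a : α) (z z' : Fac α) : Prop :=
  Chain a (fun x y => RStep x y ∧ Multiset.card x = Multiset.card y) z z'

/-- There is a monotone `R`-chain from `z` to `z'` in `Z a`. -/
def MonRChain (a : α) (z z' : Fac α) : Prop :=
  Chain a (fun x y => RStep x y ∧ Multiset.card x ≤ Multiset.card y) z z'

/-- `μ(a)`: the supremum, over the `R`-classes `ρ` of `Z a`, of the minimal length of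
an element of `ρ`. -/
noncomputable def mu (a : α) : ℕ∞ :=
  sSup {r : ℕ∞ | ∃ z ∈ Z a,
    r = ((sInf {n : ℕ | ∃ z', RRel a z z' ∧ Multiset.card z' = n} : ℕ) : ℕ∞)}

noncomputable def muH (α : Type*) [CancelCommMonoid α] : ℕ∞ := ⨆ a : α, mu a

/-- `μ_eq(a) = sup{k ∈ L(a) : Z_k(a) has more than one ≈_eq-class}`. -/
noncomputable def mueq (a : α) : ℕ∞ :=
  sSup {r : ℕ∞ | ∃ k ∈ L a,
    (∃ z ∈ Zk a k, ∃ z' ∈ Zk a k, ¬ RRelEq a z z') ∧ r = (k : ℕ∞)}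

noncomputable def mueqH (α : Type*) [CancelCommMonoid α] : ℕ∞ := ⨆ a : α, mueq a

/-- `μ_adj(a) = sup{k ∈ L(a) : d(Z_k(a), Z_l(a)) = k for the l ∈ L(a), l < k adjacent to k}`. -/
noncomputable def muadj (a : α) : ℕ∞ :=
  sSup {r : ℕ∞ | ∃ k ∈ L a,
    (∃ l : ℕ, Adjacent a l k ∧ dS (Zk a k) (Zk a l) = k) ∧ r = (k : ℕ∞)}

noncomputable def muadjH (α : Type*) [CancelCommMonoid α] : ℕ∞ := ⨆ a : α, muadj a

/-- The monoid of relations of `H`, as a subset of `Z(H) × Z(H)`. -/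
def relMon (α : Type*) [CancelCommMonoid α] : Set (Fac α × Fac α) :=
  {p | piF p.1 = piF p.2}

/-- The monoid of equal-length relations of `H`. -/
def relMonEq (α : Type*) [CancelCommMonoid α] : Set (Fac α × Fac α) :=
  {p | piF p.1 = piF p.2 ∧ Multiset.card p.1 = Multiset.card p.2}

/-- The monoid of monotone relations of `H`. -/
def relMonMon (α : Type*) [CancelCommMonoid α] : Set (Fac α × Fac α) :=
  {p | piF p.1 = piF p.2 ∧ Multiset.card p.1 ≤ Multiset.card p.2}

/-- `p` is an atom (irreducible element) of the reduced submonoid `S` of `Z(H) × Z(H)`. -/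
def IsAtomIn (S : Set (Fac α × Fac α)) (p : Fac α × Fac α) : Prop :=
  p ∈ S ∧ p ≠ 0 ∧ ∀ q ∈ S, ∀ r ∈ S, p = q + r → q = 0 ∨ r = 0

/-- `A_a(S) = A(S) ∩ (Z(a) × Z(a))`. -/
def AtomsAt (S : Set (Fac α × Fac α)) (a : α) : Set (Fac α × Fac α) :=
  {p | IsAtomIn S p ∧ p.1 ∈ Z a ∧ p.2 ∈ Z a}

/-- The tame degree `t(a, x)`. -/
noncomputable def tdeg (a : α) (x : Fac α) : ℕ∞ :=
  sInf {N : ℕ∞ | ∀ z ∈ Z a, (∃ w ∈ Z a, x ≤ w) →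
    ∃ z' ∈ Z a, x ≤ z' ∧ (d z z' : ℕ∞) ≤ N}

/-- The tame degree `t(H) = sup{t(a, u) : a ∈ H, u ∈ A(H)}`. -/
noncomputable def tH (α : Type*) [CancelCommMonoid α] : ℕ∞ :=
  ⨆ (a : α) (u : {u : α // Irreducible u}), tdeg a {u}

/-- The `m`-adjacent catenary degree of an element:
`c_{ad,m}(a) = sup{d(Z_k(a), Z_{[k-m,k)}(a)) : k ∈ L(a)}`. -/
noncomputable def cadm (m : ℕ) (a : α) : ℕ∞ :=
  sSup {r : ℕ∞ | ∃ k ∈ L a, r = (dS (Zk a k) (ZM a (Set.Ico (k - m) k)) : ℕ∞)}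

noncomputable def cadmH (α : Type*) [CancelCommMonoid α] (m : ℕ) : ℕ∞ := ⨆ a : α, cadm m a

/-- `μ_{ad,m}(a) = sup{k ∈ L(a) : d(Z_k(a), Z_{[k-m,k)}(a)) = k}`. -/
noncomputable def muadm (m : ℕ) (a : α) : ℕ∞ :=
  sSup {r : ℕ∞ | ∃ k ∈ L a, dS (Zk a k) (ZM a (Set.Ico (k - m) k)) = k ∧ r = (k : ℕ∞)}

noncomputable def muadmH (α : Type*) [CancelCommMonoid α] (m : ℕ) : ℕ∞ := ⨆ a : α, muadm m a

/-- `H` is reduced: the only unit is `1`. -/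
def Reduced (α : Type*) [CancelCommMonoid α] : Prop := ∀ a : α, IsUnit a → a = 1

/-- `H` is atomic: every element is a product of atoms. -/
def Atomic (α : Type*) [CancelCommMonoid α] : Prop := ∀ a : α, ∃ z : Fac α, piF z = a

/-- The ascending chain condition on principal ideals. -/
def ACCP (α : Type*) [CancelCommMonoid α] : Prop :=
  ∀ f : ℕ → α, (∀ n, f (n + 1) ∣ f n) → ∃ N, ∀ n, N ≤ n → f N ∣ f n

open Multiset Relation

lemma piF_add (x y : Fac α) : piF (x + y) = piF x * piF y := by
  simp [piF]

lemma d_add_left (r x y : Fac α) : d (r + x) (r + y) = d x y := by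
  simp only [d, add_tsub_add_eq_tsub_left]

lemma d_add_right (x y r : Fac α) : d (x + r) (y + r) = d x y := by
  simp only [d, add_tsub_add_eq_tsub_right]

lemma d_le_card_right {x y : Fac α} (h : card x = card y) : d x y ≤ card y := by
  let := Classical.decEq {u : α // Irreducible u}
  exact max_le (le_trans (card_le_card tsub_le_self) h.le) (card_le_card tsub_le_self)

def StepIn (a : α) (P : Fac α → Fac α → Prop) (x y : Fac α) : Prop :=
  x ∈ Z a ∧ y ∈ Z a ∧ P x y

theorem chain_iff_reflTransGen {a : α} {P : Fac α → Fac α → Prop} {z z' : Fac α}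
    (hz : z ∈ Z a) : Chain a P z z' ↔ ReflTransGen (StepIn a P) z z' := by
  constructor
  · rintro ⟨n, c, rfl, rfl, hmem, hstep⟩
    have hchain := List.relationReflTransGen_of_exists_isChain (List.ofFn c)
      (List.isChain_ofFn (r := StepIn a P) |>.2
        fun i hi => ⟨hmem _, hmem _, hstep ⟨i, by omega⟩⟩) (by simp)
    rwa [List.head_ofFn, List.getLast_ofFn] at hchain
  · intro h
    obtain ⟨l, hl, rfl⟩ := List.exists_isChain_cons_of_relationReflTransGen h
    have hmem := List.IsChain.induction (· ∈ Z a) _ hl (fun _ _ hxy _ => hxy.2.1) fun _ => hz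
    refine ⟨l.length, fun i => (z :: l)[i], rfl, ?_, fun i => hmem _ (List.getElem_mem _),
      fun i => (List.isChain_iff_getElem.1 hl i (by simp)).2.2⟩
    simp [List.getLast_eq_getElem]

lemma relMonEq_add {p q : Fac α × Fac α} (hp : p ∈ relMonEq α) (hq : q ∈ relMonEq α) :
    p + q ∈ relMonEq α :=
  ⟨by simp only [Prod.fst_add, Prod.snd_add, piF_add, hp.1, hq.1],
    by simp only [Prod.fst_add, Prod.snd_add, card_add, hp.2, hq.2]⟩

lemma eq_zero_of_fst_eq_zero {p : Fac α × Fac α} (hp : p ∈ relMonEq α) (h : p.1 = 0) :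
    p = 0 :=
  Prod.ext h (card_eq_zero.1 (hp.2 ▸ h ▸ card_zero))

lemma eq_zero_of_snd_eq_zero {p : Fac α × Fac α} (hp : p ∈ relMonEq α) (h : p.2 = 0) :
    p = 0 :=
  Prod.ext (card_eq_zero.1 (hp.2.symm ▸ h ▸ card_zero)) h

theorem exists_isAtomIn_add_of_mem_relMonEq {p : Fac α × Fac α} (hp : p ∈ relMonEq α)
    (hp0 : p ≠ 0) : ∃ q r, IsAtomIn (relMonEq α) q ∧ r ∈ relMonEq α ∧ p = q + r := by
  induction hn : card p.1 using Nat.strong_induction_on generalizing p with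
  | _ n ih =>
  by_cases hA : IsAtomIn (relMonEq α) p
  · exact ⟨p, 0, hA, ⟨rfl, rfl⟩, (add_zero p).symm⟩
  obtain ⟨q, hq, r, hr, rfl, hq0, hr0⟩ :
      ∃ q ∈ relMonEq α, ∃ r ∈ relMonEq α, p = q + r ∧ q ≠ 0 ∧ r ≠ 0 := by
    simpa [IsAtomIn, hp, hp0] using hA
  have hr1 : 0 < card r.1 := card_pos.2 fun h => hr0 (eq_zero_of_fst_eq_zero hr h)
  obtain ⟨x, s, hx, hs, rfl⟩ := ih (card q.1) (by simp at hn; omega) hq hq0 rfl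
  exact ⟨x, s + r, hx, relMonEq_add hs hr, add_assoc _ _ _⟩

abbrev EqChain (N : ℕ∞) (a : α) : Fac α → Fac α → Prop :=
  ReflTransGen (StepIn a fun x y => (d x y : ℕ∞) ≤ N ∧ card x = card y)

def EqChainConnected (α : Type*) [CancelCommMonoid α] (N : ℕ∞) (n : ℕ) : Prop :=
  ∀ (a : α) (z z' : Fac α), z ∈ Z a → z' ∈ Z a → card z = n → card z' = n →
    EqChain N a z z'

lemma EqChain.add_left {N : ℕ∞} {b : α} {x y : Fac α} (r : Fac α) (h : EqChain N b x y) :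
    EqChain N (piF r * b) (r + x) (r + y) :=
  h.lift (r + ·) fun c c' ⟨hc, hc', hd, hcard⟩ =>
    ⟨(piF_add r c).trans (congrArg _ hc), (piF_add r c').trans (congrArg _ hc'),
      by rwa [d_add_left], by simp [hcard]⟩

lemma eqChain_of_rStep {N : ℕ∞} {n : ℕ} (ih : ∀ m < n, EqChainConnected α N m) {a : α}
    {z z' : Fac α} (hz : z ∈ Z a) (hz' : z' ∈ Z a) (hn : card z = n) (hn' : card z' = n)
    (h : RStep z z') : EqChain N a z z' := by
  obtain ⟨u, hu, hu'⟩ := h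
  obtain ⟨w, rfl⟩ := Multiset.le_iff_exists_add.1 (singleton_le.2 hu)
  obtain ⟨w', rfl⟩ := Multiset.le_iff_exists_add.1 (singleton_le.2 hu')
  have hww' : piF w' = piF w :=
    mul_left_cancel ((piF_add _ _).symm.trans (hz'.trans (hz.symm.trans (piF_add _ _))))
  simp only [card_add, card_singleton] at hn hn'
  rw [← hz, piF_add]
  exact (ih _ (by omega) _ w w' rfl hww' rfl (by omega)).add_left {u}

lemma eqChain_add_right_of_rRelEq {N : ℕ∞} {n : ℕ} (ih : ∀ m < n, EqChainConnected α N m)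
    {x y r : Fac α} (hn : card (x + r) = n) (h : RRelEq (piF x) x y) :
    EqChain N (piF (x + r)) (x + r) (y + r) := by
  -- the length is carried along so that `ih` applies to each translated link
  suffices key : ∀ c, ReflTransGen (StepIn (piF x) fun v v' => RStep v v' ∧ card v = card v')
      x c → EqChain N (piF (x + r)) (x + r) (c + r) ∧ card c = card x from
    (key y ((chain_iff_reflTransGen rfl).1 h)).1
  intro c hc
  induction hc with
  | refl => exact ⟨.refl, rfl⟩
  | tail _ hstep ihc =>
    obtain ⟨hb, hc, ⟨u, hub, huc⟩, hcard⟩ := hstep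
    obtain ⟨hchain, hbx⟩ := ihc
    have hmem : ∀ {w}, w ∈ Z (piF x) → w + r ∈ Z (piF (x + r)) := fun hw => by
      show piF (_ + r) = piF (x + r)
      rw [piF_add, piF_add, hw]
    refine ⟨hchain.trans (eqChain_of_rStep ih (hmem hb) (hmem hc) ?_ ?_
      ⟨u, mem_add.2 (.inl hub), mem_add.2 (.inl huc)⟩), hcard ▸ hbx⟩ <;>
    simp only [card_add] at hn ⊢ <;> omega

theorem eqChainConnected_of_card_snd_le {N : ℕ∞}
    (hN : ∀ p : Fac α × Fac α, IsAtomIn (relMonEq α) p → ¬ RRelEq (piF p.1) p.1 p.2 →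
      (card p.2 : ℕ∞) ≤ N)
    (n : ℕ) : EqChainConnected α N n := by
  induction n using Nat.strong_induction_on with | _ n ih => ?_
  intro a z z' hz hz' hn hn'
  rcases n.eq_zero_or_pos with rfl | hpos
  · rw [card_eq_zero.1 hn, card_eq_zero.1 hn']
  obtain ⟨⟨x, y⟩, ⟨r, r'⟩, hxy, -, hzz'⟩ :=
    exists_isAtomIn_add_of_mem_relMonEq (p := (z, z')) ⟨hz.trans hz'.symm, hn.trans hn'.symm⟩
      fun h => by simp_all
  obtain ⟨rfl, rfl⟩ := Prod.mk.inj hzz'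
  have ha : piF (x + r) = a := hz
  subst ha
  obtain ⟨hpi, hcard⟩ : piF x = piF y ∧ card x = card y := hxy.1
  have hw : y + r ∈ Z (piF (x + r)) := by
    show piF (y + r) = piF (x + r)
    rw [piF_add, piF_add, hpi]
  obtain ⟨u, hu⟩ := exists_mem_of_ne_zero fun h => hxy.2.1 (eq_zero_of_snd_eq_zero hxy.1 h)
  refine ReflTransGen.trans ?_ (eqChain_of_rStep ih hw hz' (by simpa [hcard] using hn) hn'
    ⟨u, mem_add.2 (.inl hu), mem_add.2 (.inl hu)⟩)
  by_cases hR : RRelEq (piF x) x y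
  · exact eqChain_add_right_of_rRelEq ih hn hR
  · refine .single ⟨hz, hw, le_trans ?_ (hN _ hxy hR), by simpa using hcard⟩
    exact_mod_cast (d_add_right x y r).trans_le (d_le_card_right hcard)

theorem stmt12_general {α : Type*} [CancelCommMonoid α] :
    ceqH α ≤ sSup {r : ℕ∞ | ∃ p : Fac α × Fac α, IsAtomIn (relMonEq α) p ∧
      ¬ RRelEq (piF p.1) p.1 p.2 ∧ r = (Multiset.card p.2 : ℕ∞)} := by
  refine iSup_le fun a => sInf_le fun z hz z' hz' hzz' => (chain_iff_reflTransGen hz).2 ?_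
  exact eqChainConnected_of_card_snd_le (fun p hp hR => le_sSup (by exact ⟨p, hp, hR, rfl⟩))
    _ a z z' hz hz' rfl hzz'.symm

/-- Let `H` be a reduced, commutative, cancellative, atomic monoid. Then
`c_eq(H) ≤ sup{|y| : (x, y) ∈ A(∼_{H,eq}), x and y not ≈_eq-related}`. -/
theorem stmt12 {α : Type*} [CancelCommMonoid α]
    (hred : Reduced α) (hatomic : Atomic α) :
    ceqH α ≤ sSup {r : ℕ∞ | ∃ p : Fac α × Fac α, IsAtomIn (relMonEq α) p ∧
      ¬ RRelEq (piF p.1) p.1 p.2 ∧ r = (Multiset.card p.2 : ℕ∞)} :=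
  stmt12_general

end CMR
end

section
/- Let H be a reduced, commutative, cancellative, atomic monoid and let a ∈ H satisfy |L(a)| ≤ 2. Then μ_adj(a) ≤ t(H). -/
theorem Set.subset_pair_of_mem_of_ne {α : Type*} {s : Set α} {a b c e : α} (h : s ⊆ {a, b})
    (hc : c ∈ s) (he : e ∈ s) (hce : c ≠ e) : s ⊆ {c, e} := by
  rw [Set.subset_pair_iff] at h ⊢
  grind

namespace CMR

variable {α : Type*} [CancelCommMonoid α]

open Multiset

theorem d_eq_max_card_sub [DecidableEq {u : α // Irreducible u}] (x y : Fac α) :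
    d x y = max (card (x - y)) (card (y - x)) := by
  unfold d
  congr!

theorem d_comm (x y : Fac α) : d x y = d y x := by
  classical
  rw [d_eq_max_card_sub, d_eq_max_card_sub, max_comm]

theorem d_add_card_inter [DecidableEq {u : α // Irreducible u}] (x y : Fac α) :
    d x y + card (x ∩ y) = max (card x) (card y) := by
  have hx := congrArg card (sub_add_inter x y)
  have hy := congrArg card (sub_add_inter y x)
  rw [card_add] at hx hy
  rw [inter_comm] at hy
  rw [d_eq_max_card_sub]
  omega

theorem d_le_card_left {x y : Fac α} (h : card y ≤ card x) : d x y ≤ card x := by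
  classical
  have := d_add_card_inter x y
  omega

theorem disjoint_of_d_eq_card {x y : Fac α} (h : card y ≤ card x) (hd : d x y = card x) :
    Disjoint x y := by
  classical
  have := d_add_card_inter x y
  rw [← inter_eq_zero_iff_disjoint, ← card_eq_zero]
  omega

theorem dS_le_d {X Y : Set (Fac α)} {x y : Fac α} (hx : x ∈ X) (hy : y ∈ Y) :
    dS X Y ≤ d x y :=
  Nat.sInf_le ⟨x, hx, y, hy, rfl⟩

section
variable {a : α} {k l : ℕ} {x y : Fac α}

theorem d_eq_of_dS_Zk_eq (hlk : l ≤ k) (h : dS (Zk a k) (Zk a l) = k)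
    (hx : x ∈ Zk a k) (hy : y ∈ Zk a l) : d x y = k := by
  refine le_antisymm ?_ (h ▸ dS_le_d hx hy)
  rw [← hx.2] at hlk ⊢
  exact d_le_card_left (hy.2 ▸ hlk)

theorem disjoint_of_dS_Zk_eq (hlk : l ≤ k) (h : dS (Zk a k) (Zk a l) = k)
    (hx : x ∈ Zk a k) (hy : y ∈ Zk a l) : Disjoint x y :=
  disjoint_of_d_eq_card (hx.2 ▸ hy.2 ▸ hlk) (hx.2 ▸ d_eq_of_dS_Zk_eq hlk h hx hy)

end

theorem le_tdeg {a : α} {u : {u : α // Irreducible u}} {z z' : Fac α} {n : ℕ}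
    (hz : z ∈ Z a) (hu : u ∈ z) (hz' : z' ∈ Z a) (h : ∀ w ∈ Z a, u ∈ w → n ≤ d z' w) :
    (n : ℕ∞) ≤ tdeg a {u} := by
  refine le_sInf fun N hN => ?_
  obtain ⟨w, hw, huw, hdw⟩ := hN z' hz' ⟨z, hz, singleton_le.2 hu⟩
  exact (Nat.cast_le.2 (h w hw (singleton_le.1 huw))).trans hdw

theorem tdeg_le_tH (a : α) (u : {u : α // Irreducible u}) : tdeg a {u} ≤ tH α :=
  le_iSup₂_of_le a u le_rfl

theorem stmt16_general {α : Type*} [CancelCommMonoid α]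
    (a : α)
    (hL : ∃ k l : ℕ, L a ⊆ {k, l}) :
    muadj a ≤ tH α := by
  refine sSup_le ?_
  rintro _ ⟨k, hk, ⟨l, ⟨hl, -, hlk, -⟩, hdS⟩, rfl⟩
  obtain ⟨k₀, l₀, hL⟩ := hL
  have hlen := Set.subset_pair_of_mem_of_ne hL hk hl hlk.ne'
  obtain ⟨z, hz, rfl⟩ := hk
  obtain ⟨z', hz', rfl⟩ := hl
  obtain ⟨u, hu⟩ := exists_mem_of_ne_zero (card_pos.1 (pos_of_gt hlk))
  refine (le_tdeg hz hu hz' fun w hw huw => ?_).trans (tdeg_le_tH a u)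
  rcases hlen ⟨w, hw, rfl⟩ with hwk | hwl
  · rw [d_comm, d_eq_of_dS_Zk_eq hlk.le hdS ⟨hw, hwk⟩ ⟨hz', rfl⟩]
  · exact absurd huw (disjoint_left.1 (disjoint_of_dS_Zk_eq hlk.le hdS ⟨hz, rfl⟩ ⟨hw, hwl⟩) hu)

/-- Let `H` be a reduced, commutative, cancellative, atomic monoid and `a ∈ H` with
`|L(a)| ≤ 2`. Then `μ_adj(a) ≤ t(H)`. -/
theorem stmt16 {α : Type*} [CancelCommMonoid α]
    (hred : Reduced α) (hatomic : Atomic α) (a : α)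
    (hL : ∃ k l : ℕ, L a ⊆ {k, l}) :
    muadj a ≤ tH α :=
  stmt16_general a hL

end CMR
end
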